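/- Given a conditional next-token model, the induced probability of producing a sentence w₁⋯wₙ followed by the stop symbol, namely P(w₁|s)·P(w₂|s w₁)·…·P(wₙ|s w₁⋯w_{n−1})·P(∅|s w₁⋯wₙ), defines a sub-probability distribution on the set of all finite sentences: the sum over all finite sentences of these products is at most 1. -/

import Mathlib

/-!
Let `M n s` be the total mass of the sentences of length at most `n` generated after the prompt
`s`. Splitting off the first token gives
`M (n + 1) s = P(∅ | s) + ∑ w, P(w | s) * M n (s ++ [w]) ≤ ∑ o, P(o | s) = 1`,
so every `M n s` is at most `1` by induction on `n`, and the full sum is the supremum of these.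
-/

open scoped ENNReal

/-- The probability that the model, given prompt `s`, outputs the sentence `s'`
and then stops: the product of next-token probabilities followed by the stop
probability (`none` plays the role of the stop symbol ∅). -/
noncomputable def nextTokenProb {W : Type*} (P : List W → Option W → ℝ)
    (s s' : List W) : ℝ :=
  (∏ i ∈ Finset.range s'.length, P (s ++ s'.take i) s'[i]?) * P (s ++ s') none

theorem nextTokenProb_nil {W : Type*} (P : List W → Option W → ℝ) (s : List W) :
    nextTokenProb P s [] = P s none := by
  simp [nextTokenProb]

theorem nextTokenProb_cons {W : Type*} (P : List W → Option W → ℝ) (s : List W) (w : W)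
    (t : List W) : nextTokenProb P s (w :: t) = P s (some w) * nextTokenProb P (s ++ [w]) t := by
  simp only [nextTokenProb, List.length_cons, Finset.prod_range_succ', List.take_succ_cons,
    List.getElem?_cons_succ, List.take_zero, List.getElem?_cons_zero, List.append_assoc,
    List.cons_append, List.nil_append, List.append_nil]
  ring

namespace ENNReal

variable {α β : Type*}

theorem tsum_eq_add_tsum_comp_of_range_eq (f : α → ℝ≥0∞) {g : β → α} (a : α)
    (hg : Function.Injective g) (hrange : ∀ x, x ∈ Set.range g ↔ x ≠ a) :
    ∑' x, f x = f a + ∑' y, f (g y) := by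
  classical
  rw [ENNReal.tsum_eq_add_tsum_ite a]
  congr 1
  have hsupp : Function.support (fun x => if x = a then 0 else f x) ⊆ Set.range g := by
    intro x hx
    exact (hrange x).2 fun h => hx (if_pos h)
  rw [← hg.tsum_eq hsupp]
  exact tsum_congr fun y => if_neg ((hrange (g y)).1 ⟨y, rfl⟩)

theorem tsum_option (f : Option α → ℝ≥0∞) : ∑' o, f o = f none + ∑' a, f (some a) :=
  tsum_eq_add_tsum_comp_of_range_eq f none (Option.some_injective α) fun o => by
    cases o <;> simp

theorem tsum_list (f : List α → ℝ≥0∞) : ∑' t, f t = f [] + ∑' a, ∑' t, f (a :: t) := by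
  have hcons : Function.Injective fun p : α × List α => p.1 :: p.2 :=
    fun p q h => Prod.ext (List.cons.inj h).1 (List.cons.inj h).2
  rw [tsum_eq_add_tsum_comp_of_range_eq f [] hcons,
    ENNReal.tsum_prod (f := fun a t => f (a :: t))]
  intro t
  cases t <;> simp

theorem tsum_le_of_tsum_indicator_le (f : α → ℝ≥0∞) (size : α → ℕ) {c : ℝ≥0∞}
    (h : ∀ n, ∑' x, {x | size x ≤ n}.indicator f x ≤ c) : ∑' x, f x ≤ c := by
  rw [ENNReal.tsum_eq_iSup_sum]
  refine iSup_le fun F => ?_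
  calc ∑ x ∈ F, f x = ∑ x ∈ F, {x | size x ≤ F.sup size}.indicator f x :=
        Finset.sum_congr rfl fun x hx => (Set.indicator_of_mem (s := {x | size x ≤ F.sup size})
          (Finset.le_sup (f := size) hx) f).symm
    _ ≤ ∑' x, {x | size x ≤ F.sup size}.indicator f x := ENNReal.sum_le_tsum F
    _ ≤ c := h _

end ENNReal

section Generation

variable {W : Type*} (p : List W → Option W → ℝ≥0∞) (q : List W → List W → ℝ≥0∞)

theorem tsum_indicator_length_le_le_one (hp : ∀ s, ∑' o, p s o ≤ 1)
    (hnil : ∀ s, q s [] = p s none)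
    (hcons : ∀ s w t, q s (w :: t) = p s (some w) * q (s ++ [w]) t) (n : ℕ) (s : List W) :
    ∑' t, {t : List W | t.length ≤ n}.indicator (q s) t ≤ 1 := by
  induction n generalizing s with
  | zero =>
    rw [ENNReal.tsum_list]
    simpa [hnil] using (ENNReal.le_tsum none).trans (hp s)
  | succ n ih =>
    have hstep : ∀ w t, {t : List W | t.length ≤ n + 1}.indicator (q s) (w :: t) =
        p s (some w) * {t : List W | t.length ≤ n}.indicator (q (s ++ [w])) t := by
      intro w t
      simp only [Set.indicator, Set.mem_ofPred_eq, List.length_cons, Nat.add_le_add_iff_right,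
        hcons]
      split_ifs <;> simp
    calc ∑' t, {t : List W | t.length ≤ n + 1}.indicator (q s) t
        = p s none + ∑' w, p s (some w) *
            ∑' t, {t : List W | t.length ≤ n}.indicator (q (s ++ [w])) t := by
          rw [ENNReal.tsum_list,
            Set.indicator_of_mem (s := {t : List W | t.length ≤ n + 1}) (Nat.zero_le _), hnil]
          simp only [hstep, ENNReal.tsum_mul_left]
      _ ≤ p s none + ∑' w, p s (some w) := by
          gcongr with w
          exact mul_le_of_le_one_right' (ih _)
      _ = ∑' o, p s o := (ENNReal.tsum_option _).symm
      _ ≤ 1 := hp s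

theorem tsum_generation_le_one (hp : ∀ s, ∑' o, p s o ≤ 1) (hnil : ∀ s, q s [] = p s none)
    (hcons : ∀ s w t, q s (w :: t) = p s (some w) * q (s ++ [w]) t) (s : List W) :
    ∑' t, q s t ≤ 1 :=
  ENNReal.tsum_le_of_tsum_indicator_le _ List.length fun n =>
    tsum_indicator_length_le_le_one p q hp hnil hcons n s

end Generation

theorem subprobability_of_generation {W : Type*} [Fintype W]
    (P : List W → Option W → ℝ)
    (hnonneg : ∀ s o, 0 ≤ P s o)
    (hsum : ∀ s, ∑ o : Option W, P s o = 1)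
    (s : List W) :
    ∑' s' : List W, ENNReal.ofReal (nextTokenProb P s s') ≤ 1 := by
  refine tsum_generation_le_one (fun s o => ENNReal.ofReal (P s o))
    (fun s t => ENNReal.ofReal (nextTokenProb P s t)) (fun s => le_of_eq ?_)
    (fun s => by rw [nextTokenProb_nil]) (fun s w t => ?_) s
  · rw [tsum_fintype, ← ENNReal.ofReal_sum_of_nonneg fun o _ => hnonneg s o, hsum,
      ENNReal.ofReal_one]
  · rw [nextTokenProb_cons, ENNReal.ofReal_mul (hnonneg s (some w))]
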